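/- With w = x^{δ_1} − y^{δ_2} in A = k{x,y} (at least two commuting derivations), the elements f_1 = x + w^{δ_2} and f_2 = y + w^{δ_1} generate A as a differential algebra: k{f_1, f_2} = k{x,y}. In particular, w = f_1^{δ_1} − f_2^{δ_2}, x = f_1 − w^{δ_2}, and y = f_2 − w^{δ_1} all lie in k{f_1, f_2}. -/

import Mathlib

open MvPolynomial

/-- The free commutative monoid of derivative operators on `m` derivations. -/
abbrev DOp (m : ℕ) := Fin m →₀ ℕ

/-- The differential polynomial algebra `k{x_1,…,x_n}` with `m` commuting derivations:
the polynomial algebra on the variables `x_i^θ`. -/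
abbrev DiffPoly (k : Type) [CommRing k] (n m : ℕ) := MvPolynomial (Fin n × DOp m) k

/-- The `i`-th derivation `δ_i` of `k{x_1,…,x_n}`, with `δ_i (x_j^θ) = x_j^{θ δ_i}`. -/
noncomputable def der (k : Type) [CommRing k] (n m : ℕ) (i : Fin m) :
    Derivation k (DiffPoly k n m) (DiffPoly k n m) :=
  MvPolynomial.mkDerivation k fun p => X (p.1, p.2 + Finsupp.single i 1)

/-- Application of a derivative operator `θ = δ_1^{i_1} ⋯ δ_m^{i_m}`. -/
noncomputable def applyOp {k : Type} [CommRing k] {n m : ℕ} (θ : DOp m)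
    (f : DiffPoly k n m) : DiffPoly k n m :=
  Fin.foldr m (fun i g => (⇑(der k n m i))^[θ i] g) f

/-- The differential subalgebra generated by a set: the smallest subalgebra containing it
and closed under all the derivations. -/
noncomputable def diffAdjoin (k : Type) [CommRing k] {n m : ℕ} (S : Set (DiffPoly k n m)) :
    Subalgebra k (DiffPoly k n m) :=
  sInf {T | S ⊆ T ∧ ∀ i : Fin m, ∀ x ∈ T, der k n m i x ∈ T}

/-- The weight of the variable `x_j^θ`: `1 + |θ|`. -/
def dwt (n m : ℕ) : Fin n × DOp m → ℕ := fun p => 1 + p.2.sum fun _ v => v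

/-- The degree of a differential polynomial. -/
noncomputable def ddeg {k : Type} [CommRing k] {n m : ℕ} (f : DiffPoly k n m) : ℕ :=
  weightedTotalDegree (dwt n m) f

/-- The highest homogeneous part of a differential polynomial. -/
noncomputable def dtop {k : Type} [CommRing k] {n m : ℕ} (f : DiffPoly k n m) :
    DiffPoly k n m :=
  weightedHomogeneousComponent (dwt n m) (ddeg f) f

/-- The variable `x` of `k{x,y}`. -/
noncomputable def xx (k : Type) [CommRing k] (m : ℕ) : DiffPoly k 2 m := X (0, 0)

/-- The variable `y` of `k{x,y}`. -/
noncomputable def yy (k : Type) [CommRing k] (m : ℕ) : DiffPoly k 2 m := X (1, 0)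

/-- A differential automorphism: an algebra automorphism commuting with all derivations. -/
def IsDiffAut {k : Type} [CommRing k] {m : ℕ}
    (φ : DiffPoly k 2 m ≃ₐ[k] DiffPoly k 2 m) : Prop :=
  ∀ i x, φ (der k 2 m i x) = der k 2 m i (φ x)

/-- An elementary automorphism: of the form `(a x + f(y), y)` or `(x, b y + g(x))`. -/
def IsElementary {k : Type} [CommRing k] {m : ℕ}
    (φ : DiffPoly k 2 m ≃ₐ[k] DiffPoly k 2 m) : Prop :=
  IsDiffAut φ ∧
    ((∃ a : k, a ≠ 0 ∧ ∃ f ∈ diffAdjoin k {yy k m},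
        φ (xx k m) = C a * xx k m + f ∧ φ (yy k m) = yy k m) ∨
     (∃ b : k, b ≠ 0 ∧ ∃ g ∈ diffAdjoin k {xx k m},
        φ (yy k m) = C b * yy k m + g ∧ φ (xx k m) = xx k m))

/-- A tame automorphism: a composition of elementary automorphisms. -/
def IsTame {k : Type} [CommRing k] {m : ℕ}
    (φ : DiffPoly k 2 m ≃ₐ[k] DiffPoly k 2 m) : Prop :=
  φ ∈ Subgroup.closure {ψ | IsElementary ψ}

/-- An affine automorphism `(a₁x + b₁y + c₁, a₂x + b₂y + c₂)`. -/
def IsAffine {k : Type} [CommRing k] {m : ℕ}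
    (φ : DiffPoly k 2 m ≃ₐ[k] DiffPoly k 2 m) : Prop :=
  IsDiffAut φ ∧ ∃ a₁ b₁ c₁ a₂ b₂ c₂ : k, a₁ * b₂ ≠ a₂ * b₁ ∧
    φ (xx k m) = C a₁ * xx k m + C b₁ * yy k m + C c₁ ∧
    φ (yy k m) = C a₂ * xx k m + C b₂ * yy k m + C c₂

/-- A triangular automorphism `(a x + f(y), b y + c)`. -/
def IsTriangular {k : Type} [CommRing k] {m : ℕ}
    (φ : DiffPoly k 2 m ≃ₐ[k] DiffPoly k 2 m) : Prop :=
  IsDiffAut φ ∧ ∃ a b c : k, a ≠ 0 ∧ b ≠ 0 ∧ ∃ f ∈ diffAdjoin k {yy k m},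
    φ (xx k m) = C a * xx k m + f ∧ φ (yy k m) = C b * yy k m + C c

/-- Membership in `C = Af₂(A) ∩ Tr₂(A)`. -/
def InC {k : Type} [CommRing k] {m : ℕ}
    (φ : DiffPoly k 2 m ≃ₐ[k] DiffPoly k 2 m) : Prop :=
  IsAffine φ ∧ IsTriangular φ

/-- Membership in the set `A₀ = {id} ∪ {(y, x + a y) : a ∈ k}` of coset representatives. -/
def InA0 {k : Type} [CommRing k] {m : ℕ}
    (φ : DiffPoly k 2 m ≃ₐ[k] DiffPoly k 2 m) : Prop :=
  IsDiffAut φ ∧ (φ = 1 ∨ ∃ a : k,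
    φ (xx k m) = yy k m ∧ φ (yy k m) = xx k m + C a * yy k m)

/-- Membership in the set `B₀ = {(x + q(y), y)}`, all homogeneous components of `q` of
degree at least `2`, of coset representatives. -/
def InB0 {k : Type} [CommRing k] {m : ℕ}
    (φ : DiffPoly k 2 m ≃ₐ[k] DiffPoly k 2 m) : Prop :=
  IsDiffAut φ ∧ ∃ q ∈ diffAdjoin k {yy k m},
    (∀ d : ℕ, d < 2 → weightedHomogeneousComponent (dwt 2 m) d q = 0) ∧
    φ (xx k m) = xx k m + q ∧ φ (yy k m) = yy k m

section

variable {k : Type} [CommRing k] {n m : ℕ}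

theorem subset_diffAdjoin (S : Set (DiffPoly k n m)) : S ⊆ diffAdjoin k S :=
  fun _ hx => Algebra.mem_sInf.2 fun _ hT => hT.1 hx

theorem der_mem_diffAdjoin {S : Set (DiffPoly k n m)} (i : Fin m) {f : DiffPoly k n m}
    (hf : f ∈ diffAdjoin k S) : der k n m i f ∈ diffAdjoin k S :=
  Algebra.mem_sInf.2 fun T hT => hT.2 i f (Algebra.mem_sInf.1 hf T hT)

theorem der_X (i : Fin m) (p : Fin n × DOp m) :
    der k n m i (X p) = X (p.1, p.2 + Finsupp.single i 1) :=
  mkDerivation_X k _ p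

theorem der_der_comm (i j : Fin m) (f : DiffPoly k n m) :
    der k n m i (der k n m j f) = der k n m j (der k n m i f) := by
  have h : ⁅der k n m i, der k n m j⁆ = 0 :=
    MvPolynomial.derivation_ext fun p => by
      simp [Derivation.commutator_apply, der_X, add_right_comm]
  simpa [Derivation.commutator_apply, sub_eq_zero] using congrArg (· f) h

theorem X_mem_diffAdjoin {S : Set (DiffPoly k n m)} {j : Fin n}
    (h : X (j, 0) ∈ diffAdjoin k S) (θ : DOp m) : X (j, θ) ∈ diffAdjoin k S := by
  obtain ⟨s, rfl⟩ := Multiset.toFinsupp.surjective θ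
  induction s using Multiset.induction_on with
  | empty => simpa using h
  | cons i s ih =>
    rw [← Multiset.singleton_add, map_add, Multiset.toFinsupp_singleton, add_comm]
    simpa only [der_X] using der_mem_diffAdjoin i ih

theorem diffAdjoin_eq_top_of_X_mem {S : Set (DiffPoly k n m)}
    (h : ∀ j, X (j, 0) ∈ diffAdjoin k S) : diffAdjoin k S = ⊤ := by
  rw [eq_top_iff, ← adjoin_range_X, Algebra.adjoin_le_iff]
  rintro _ ⟨⟨j, θ⟩, rfl⟩
  exact X_mem_diffAdjoin (h j) θ

end

/-- With `w = x^{δ₁} - y^{δ₂}`, the elements `f₁ = x + w^{δ₂}` and `f₂ = y + w^{δ₁}`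
generate `k{x,y}` as a differential algebra; in particular `w`, `x`, `y` all lie in
`k{f₁, f₂}`. -/
theorem stmt15 {k : Type} [Field k] {m : ℕ} (hm : 2 ≤ m) :
    let i1 : Fin m := ⟨0, by omega⟩
    let i2 : Fin m := ⟨1, by omega⟩
    let w : DiffPoly k 2 m := der k 2 m i1 (xx k m) - der k 2 m i2 (yy k m)
    let f1 : DiffPoly k 2 m := xx k m + der k 2 m i2 w
    let f2 : DiffPoly k 2 m := yy k m + der k 2 m i1 w
    diffAdjoin k {f1, f2} = ⊤ ∧
      w ∈ diffAdjoin k {f1, f2} ∧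
      xx k m ∈ diffAdjoin k {f1, f2} ∧
      yy k m ∈ diffAdjoin k {f1, f2} := by
  intro i1 i2 w f1 f2
  have hf1 : f1 ∈ diffAdjoin k {f1, f2} := subset_diffAdjoin _ (by simp)
  have hf2 : f2 ∈ diffAdjoin k {f1, f2} := subset_diffAdjoin _ (by simp)
  -- `δ₁ δ₂ w` and `δ₂ δ₁ w` cancel, so `δ₁ f₁ - δ₂ f₂ = w`.
  have hw_eq : der k 2 m i1 f1 - der k 2 m i2 f2 = w := by
    simp only [f1, f2, map_add, der_der_comm i1 i2 w]
    exact add_sub_add_right_eq_sub _ _ _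
  have hw : w ∈ diffAdjoin k {f1, f2} :=
    hw_eq ▸ sub_mem (der_mem_diffAdjoin i1 hf1) (der_mem_diffAdjoin i2 hf2)
  have hx : xx k m ∈ diffAdjoin k {f1, f2} := by
    simpa [f1] using sub_mem hf1 (der_mem_diffAdjoin i2 hw)
  have hy : yy k m ∈ diffAdjoin k {f1, f2} := by
    simpa [f2] using sub_mem hf2 (der_mem_diffAdjoin i1 hw)
  refine ⟨diffAdjoin_eq_top_of_X_mem fun j => ?_, hw, hx, hy⟩
  fin_cases j
  exacts [hx, hy]
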